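/- arXiv:1801.10010 — 6 statements merged into one kernel-verified Lean document; each statement's English description precedes it below -/
import Mathlib

section
/- Let R and R' be domains with fraction fields K and K', and fix algebraic closures K⁺ of K and K'⁺ of K'; let R⁺ and R'⁺ be the integral closures of R in K⁺ and of R' in K'⁺ respectively. Then any ring homomorphism f : R → R' lifts to a ring homomorphism f⁺ : R⁺ → R'⁺ (i.e. the composite R → R⁺ → R'⁺ equals the composite R → R' → R'⁺). Moreover, if f is injective then f⁺ can be chosen injective, and if f is surjective then f⁺ can be chosen surjective. -/
/-- A finite sequence `y` of elements of a commutative ring `B` is a regular sequence on `B`: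
for each `i`, multiplication by `y i` is injective on `B/(y_1,…,y_{i-1})B`,
and `B ≠ (y_1,…,y_m)B`. -/
def IsRegSeq {B : Type*} [CommRing B] {m : ℕ} (y : Fin m → B) : Prop :=
  (∀ i : Fin m, ∀ b : B,
      y i * b ∈ Ideal.span (y '' {j : Fin m | j < i}) →
        b ∈ Ideal.span (y '' {j : Fin m | j < i})) ∧
  Ideal.span (Set.range y) ≠ ⊤

/-- A `B`-algebra (given by a ring hom `φ : R →+* B`) is Cohen-Macaulay with respect to a
sequence `x` of elements of `R` if `x` becomes a regular sequence in `B`. -/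
def IsCMwrt {R B : Type*} [CommRing R] [CommRing B] (φ : R →+* B)
    {d : ℕ} (x : Fin d → R) : Prop :=
  IsRegSeq fun i => φ (x i)

/-- `x` is a system of parameters of the noetherian local ring `R`: `d` is the Krull dimension,
all `x i` lie in the maximal ideal, and they generate an ideal whose radical is the maximal
ideal. -/
def IsSOP (R : Type*) [CommRing R] [IsLocalRing R] {d : ℕ} (x : Fin d → R) : Prop :=
  (d : WithBot ℕ∞) = ringKrullDim R ∧
  (∀ i, x i ∈ IsLocalRing.maximalIdeal R) ∧
  (Ideal.span (Set.range x)).radical = IsLocalRing.maximalIdeal R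

/-- `B` (via the structure map `φ`) is a big Cohen-Macaulay `R`-algebra: it is Cohen-Macaulay
with respect to every system of parameters of `R`. -/
def IsBigCM {R B : Type*} [CommRing R] [IsLocalRing R] [CommRing B] (φ : R →+* B) : Prop :=
  ∀ (d : ℕ) (x : Fin d → R), IsSOP R x → IsCMwrt φ x

/-- `A` (as an `R`-algebra) is an absolute integral closure of the domain `R`:
it is a domain containing `R`, integral over `R`, and absolutely integrally closed
(every monic polynomial of positive degree has a root); equivalently, it is the
integral closure of `R` in an algebraic closure of its fraction field. -/
structure IsAbsIntClosure (R A : Type*) [CommRing R] [CommRing A] [Algebra R A] : Prop where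
  isDomain : IsDomain A
  injective : Function.Injective (algebraMap R A)
  isIntegral : Algebra.IsIntegral R A
  monic_root : ∀ P : Polynomial A, P.Monic → 0 < P.degree → ∃ a : A, P.IsRoot a

/-- `B` is `π^{1/p^∞}`-almost Cohen-Macaulay with respect to `x`, where `π : ℕ → B` is a
compatible system of `p`-th power roots. -/
def IsAlmostCMwrt {R B : Type*} [CommRing R] [CommRing B] (φ : R →+* B)
    (π : ℕ → B) {d : ℕ} (x : Fin d → R) : Prop :=
  (∀ i : Fin d, ∀ b : B,
      φ (x i) * b ∈ Ideal.span ((fun j => φ (x j)) '' {j : Fin d | j < i}) →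
        ∀ e : ℕ, π e * b ∈ Ideal.span ((fun j => φ (x j)) '' {j : Fin d | j < i})) ∧
  ¬ Ideal.span (Set.range π) ≤ Ideal.span (Set.range fun j => φ (x j))

/-! Embed `R'⁺` into an algebraically closed field `Ω`. By lying-over, `R → R' → Ω` extends
along the integral extension `R → R⁺` to some `φ : R⁺ → Ω`. Every `φ x` is a root of a monic
polynomial with coefficients in `R'⁺`; such a polynomial splits into linear factors over `R'⁺`,
so `φ x` already lies in `R'⁺` and `φ` factors through `R'⁺`. For injectivity, a nonzero ideal
of the domain `R⁺` meets `R` nontrivially since `R⁺` is integral over `R`. For surjectivity, an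
element of `R'⁺` is a root of a monic polynomial over `R'`, which lifts to a monic polynomial
over `R` and hence splits over `R⁺`. -/

open Polynomial

namespace Polynomial

theorem Monic.splits_of_forall_exists_isRoot {A : Type*} [CommRing A]
    (hroot : ∀ P : A[X], P.Monic → 0 < P.degree → ∃ a : A, P.IsRoot a)
    {Q : A[X]} (hQ : Q.Monic) : Q.Splits := by
  induction hn : Q.natDegree generalizing Q with
  | zero => exact .of_natDegree_eq_zero hn
  | succ n ih =>
    have : Nontrivial A := Nontrivial.of_polynomial_ne (p := Q) (q := 0) (by rintro rfl; simp at hn)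
    obtain ⟨a, ha⟩ := hroot Q hQ (natDegree_pos_iff_degree_pos.mp (by omega))
    have hfactor := mul_divByMonic_eq_iff_isRoot.mpr ha
    have hQ' : (Q /ₘ (X - C a)).Monic := (monic_X_sub_C a).of_mul_monic_left (by rwa [hfactor])
    rw [← hfactor, (monic_X_sub_C a).natDegree_mul hQ', natDegree_X_sub_C] at hn
    rw [← hfactor]
    exact (Splits.X_sub_C a).mul (ih hQ' (by omega))

theorem Splits.mem_range_of_isRoot_map {A B : Type*} [CommRing A] [IsDomain A] [CommRing B]
    [IsDomain B] {Q : A[X]} (hQ : Q.Splits) {ψ : A →+* B} (hQψ : Q.map ψ ≠ 0) {z : B}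
    (hz : (Q.map ψ).IsRoot z) : z ∈ ψ.range := by
  rw [← mem_roots hQψ, hQ.roots_map_of_ne_zero hQψ, Multiset.mem_map] at hz
  obtain ⟨a, -, rfl⟩ := hz
  exact ⟨a, rfl⟩

theorem Monic.mem_range_of_isRoot_map {A B : Type*} [CommRing A] [IsDomain A] [CommRing B]
    [IsDomain B] (hroot : ∀ P : A[X], P.Monic → 0 < P.degree → ∃ a : A, P.IsRoot a)
    {Q : A[X]} (hQ : Q.Monic) {ψ : A →+* B} {z : B} (hz : (Q.map ψ).IsRoot z) :
    z ∈ ψ.range :=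
  (hQ.splits_of_forall_exists_isRoot hroot).mem_range_of_isRoot_map (hQ.map ψ).ne_zero hz

end Polynomial

theorem exists_ringHom_comp_algebraMap_eq_of_isAlgClosed {R S K : Type*} [CommRing R]
    [CommRing S] [Algebra R S] [Algebra.IsIntegral R S] [Field K] [IsAlgClosed K] (g : R →+* K)
    (hg : RingHom.ker (algebraMap R S) ≤ RingHom.ker g) :
    ∃ φ : S →+* K, φ.comp (algebraMap R S) = g := by
  have := RingHom.ker_isPrime g
  obtain ⟨Q, -, hQ, hQg⟩ := Ideal.exists_ideal_over_prime_of_isIntegral (RingHom.ker g)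
    (⊥ : Ideal S) (by rwa [← RingHom.ker_eq_comap_bot])
  have : Q.LiesOver (RingHom.ker g) := ⟨hQg.symm⟩
  let : Algebra (R ⧸ RingHom.ker g) K := g.kerLift.toAlgebra
  have : FaithfulSMul (R ⧸ RingHom.ker g) K :=
    (faithfulSMul_iff_algebraMap_injective _ _).mpr g.kerLift_injective
  have : Module.IsTorsionFree (R ⧸ RingHom.ker g) (S ⧸ Q) := FaithfulSMul.to_isTorsionFree _ _
  let φ : (S ⧸ Q) →ₐ[R ⧸ RingHom.ker g] K := IsAlgClosed.lift
  exact ⟨φ.toRingHom.comp (Ideal.Quotient.mk Q),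
    RingHom.ext fun r => φ.commutes (Ideal.Quotient.mk _ r)⟩

namespace RingHom

theorem exists_comp_eq_of_range_le {S A B : Type*} [Ring S] [Ring A] [Ring B]
    {φ : S →+* B} {ι : A →+* B} (hι : Function.Injective ι) (h : φ.range ≤ ι.range) :
    ∃ ψ : S →+* A, ι.comp ψ = φ := by
  let e : A ≃+* ι.range := .ofLeftInverse (Function.leftInverse_invFun hι)
  refine ⟨e.symm.toRingHom.comp (φ.codRestrict ι.range fun x => h ⟨x, rfl⟩),
    ext fun x => ?_⟩
  exact congrArg Subtype.val (e.apply_symm_apply _)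

theorem range_le_of_comp_algebraMap_eq {R S A B : Type*} [CommRing R] [CommRing S]
    [Algebra R S] [Algebra.IsIntegral R S] [CommRing A] [IsDomain A] [CommRing B] [IsDomain B]
    (hroot : ∀ P : A[X], P.Monic → 0 < P.degree → ∃ a : A, P.IsRoot a)
    {φ : S →+* B} {ι : A →+* B} {h : R →+* A} (hφ : φ.comp (algebraMap R S) = ι.comp h) :
    φ.range ≤ ι.range := by
  rintro _ ⟨x, rfl⟩
  obtain ⟨P, hP, hPx⟩ := Algebra.IsIntegral.isIntegral (R := R) x
  refine (hP.map h).mem_range_of_isRoot_map hroot ?_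
  rw [IsRoot, eval_map, eval₂_map, ← hφ, ← hom_eval₂, hPx, map_zero]

theorem injective_of_injective_comp_algebraMap {R S T : Type*} [CommRing R] [Nontrivial R]
    [CommRing S] [IsDomain S] [Algebra R S] [Algebra.IsIntegral R S] [Semiring T] {φ : S →+* T}
    (hφ : Function.Injective (φ.comp (algebraMap R S))) : Function.Injective φ := by
  rw [injective_iff_ker_eq_bot] at hφ ⊢
  refine Ideal.eq_bot_of_comap_eq_bot (R := R) ?_
  rw [← hφ, ← comap_ker]

theorem surjective_of_comp_algebraMap_eq {R R' A A' : Type*} [CommRing R] [CommRing R']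
    [CommRing A] [IsDomain A] [CommRing A'] [IsDomain A'] [Algebra R A] [Algebra R' A']
    [Algebra.IsIntegral R' A']
    (hroot : ∀ P : A[X], P.Monic → 0 < P.degree → ∃ a : A, P.IsRoot a)
    {f : R →+* R'} (hf : Function.Surjective f) {φ : A →+* A'}
    (hφ : φ.comp (algebraMap R A) = (algebraMap R' A').comp f) : Function.Surjective φ := by
  have := (algebraMap R' A').domain_nontrivial
  intro b
  obtain ⟨Q, hQ, hQb⟩ := Algebra.IsIntegral.isIntegral (R := R') b
  obtain ⟨P, hPQ, -, hP⟩ := lifts_and_degree_eq_and_monic (map_surjective f hf Q) hQ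
  refine (hP.map (algebraMap R A)).mem_range_of_isRoot_map hroot ?_
  rwa [IsRoot, Polynomial.map_map, hφ, ← Polynomial.map_map, hPQ, eval_map, ← aeval_def]

end RingHom

theorem abs_int_closure_lift_general
    (R R' : Type) [CommRing R] [CommRing R'] [IsDomain R]
    (Rplus R'plus : Type) [CommRing Rplus] [CommRing R'plus]
    [Algebra R Rplus] [Algebra R' R'plus]
    (hRplus : IsAbsIntClosure R Rplus) (hR'plus : IsAbsIntClosure R' R'plus)
    (f : R →+* R') :
    ∃ fplus : Rplus →+* R'plus,
      (∀ r : R, fplus (algebraMap R Rplus r) = algebraMap R' R'plus (f r)) ∧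
      (Function.Injective f → Function.Injective fplus) ∧
      (Function.Surjective f → Function.Surjective fplus) := by
  have := hRplus.isDomain
  have := hR'plus.isDomain
  have := hRplus.isIntegral
  have := hR'plus.isIntegral
  let Ω := AlgebraicClosure (FractionRing R'plus)
  have hι : Function.Injective (algebraMap R'plus Ω) := by
    rw [IsScalarTower.algebraMap_eq R'plus (FractionRing R'plus)]
    exact (algebraMap (FractionRing R'plus) Ω).injective.comp (IsFractionRing.injective _ _)
  obtain ⟨φ, hφ⟩ := exists_ringHom_comp_algebraMap_eq_of_isAlgClosed
    ((algebraMap R'plus Ω).comp ((algebraMap R' R'plus).comp f))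
    (by rw [(RingHom.injective_iff_ker_eq_bot _).mp hRplus.injective]; exact bot_le)
  obtain ⟨fplus, rfl⟩ := RingHom.exists_comp_eq_of_range_le hι
    (RingHom.range_le_of_comp_algebraMap_eq hR'plus.monic_root hφ)
  have hcomm : fplus.comp (algebraMap R Rplus) = (algebraMap R' R'plus).comp f :=
    RingHom.ext fun r => hι (RingHom.congr_fun hφ r)
  refine ⟨fplus, RingHom.congr_fun hcomm, fun hf => ?_, fun hf => ?_⟩
  · exact RingHom.injective_of_injective_comp_algebraMap
      (by rw [hcomm, RingHom.coe_comp]; exact hR'plus.injective.comp hf)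
  · exact RingHom.surjective_of_comp_algebraMap_eq hRplus.monic_root hf hcomm

/-- **Proposition 2.1 (1)**: any ring homomorphism `f : R → R'` between domains lifts to a
homomorphism `f⁺ : R⁺ → R'⁺` of absolute integral closures; if `f` is injective
(resp. surjective) the lift can be chosen injective (resp. surjective). -/
theorem abs_int_closure_lift
    (R R' : Type) [CommRing R] [CommRing R'] [IsDomain R] [IsDomain R']
    (Rplus R'plus : Type) [CommRing Rplus] [CommRing R'plus]
    [Algebra R Rplus] [Algebra R' R'plus]
    (hRplus : IsAbsIntClosure R Rplus) (hR'plus : IsAbsIntClosure R' R'plus)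
    (f : R →+* R') :
    ∃ fplus : Rplus →+* R'plus,
      (∀ r : R, fplus (algebraMap R Rplus r) = algebraMap R' R'plus (f r)) ∧
      (Function.Injective f → Function.Injective fplus) ∧
      (Function.Surjective f → Function.Surjective fplus) :=
  abs_int_closure_lift_general R R' Rplus R'plus hRplus hR'plus f
end

section
/- Let A be a domain in which every monic polynomial with coefficients in A splits into a product of monic linear factors (equivalently, every monic polynomial over A has a root in A), and let 𝔮 be a prime ideal of A. Then every monic polynomial with coefficients in the quotient domain A/𝔮 splits into a product of monic linear factors over A/𝔮; consequently the fraction field of A/𝔮 is algebraically closed. -/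
/-!
Monic polynomials over `A ⧸ 𝔮` lift to monic polynomials of the same degree over `A`, and roots
of the lift map to roots. For the fraction field `K` of a domain `B` in which monic polynomials
have roots: an element `x` algebraic over `K` has a nonzero multiple `d • x` integral over `B`;
its monic equation splits into linear factors over `B`, so in a domain `d • x` equals one of the
roots `b`, and `x = b / d` lies in `K`.
-/

open Polynomial

/-- Stated with roots rather than with splitting; `IsAbsolutelyIntegrallyClosed.splits` recovers
the splitting. -/
def IsAbsolutelyIntegrallyClosed (R : Type*) [CommRing R] : Prop :=
  ∀ P : R[X], P.Monic → 0 < P.degree → ∃ a : R, P.IsRoot a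

namespace IsAbsolutelyIntegrallyClosed

variable {R : Type*} [CommRing R]

theorem splits (hR : IsAbsolutelyIntegrallyClosed R) {f : R[X]} (hf : f.Monic) : f.Splits := by
  nontriviality R using Subsingleton.elim f 0 ▸ Splits.zero
  induction h : f.natDegree using Nat.strong_induction_on generalizing f with
  | _ n ih =>
    rcases Nat.eq_zero_or_pos n with rfl | hn
    · exact Splits.of_natDegree_eq_zero h
    obtain ⟨a, ha⟩ := hR f hf (natDegree_pos_iff_degree_pos.mp (h ▸ hn))
    have hquot : (f /ₘ (X - C a)).Monic := (monic_X_sub_C a).of_mul_monic_left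
      ((mul_divByMonic_eq_iff_isRoot.mpr ha).symm ▸ hf)
    rw [← mul_divByMonic_eq_iff_isRoot.mpr ha]
    refine (Splits.X_sub_C a).mul (ih _ ?_ hquot rfl)
    rw [natDegree_divByMonic _ (monic_X_sub_C a), natDegree_X_sub_C]
    omega

theorem of_surjective {S : Type*} [CommRing S] (hR : IsAbsolutelyIntegrallyClosed R)
    (φ : R →+* S) (hφ : Function.Surjective φ) : IsAbsolutelyIntegrallyClosed S := by
  intro P hP hdeg
  have : Nontrivial S := nontrivial_iff.mp (nontrivial_of_ne P 0 (ne_zero_of_degree_gt hdeg))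
  obtain ⟨Q, hQmap, hQdeg, hQ⟩ := lifts_and_degree_eq_and_monic (map_surjective φ hφ P) hP
  obtain ⟨a, ha⟩ := hR Q hQ (hQdeg ▸ hdeg)
  refine ⟨φ a, ?_⟩
  rw [IsRoot, ← hQmap, eval_map, eval₂_hom, ha.eq_zero, map_zero]

theorem mem_range_of_isIntegral (hR : IsAbsolutelyIntegrallyClosed R) {S : Type*} [CommRing S]
    [IsDomain S] [Algebra R S] {x : S} (hx : IsIntegral R x) : x ∈ (algebraMap R S).range := by
  obtain ⟨q, hq, hqx⟩ := hx
  obtain ⟨m, hm⟩ := splits_iff_exists_multiset.mp (hR.splits hq)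
  rw [hq.leadingCoeff, C_1, one_mul] at hm
  rw [hm, ← aeval_def, map_multiset_prod, Multiset.map_map] at hqx
  obtain ⟨r, -, hr⟩ := Multiset.mem_map.mp (Multiset.prod_eq_zero_iff.mp hqx)
  exact ⟨r, (sub_eq_zero.mp (by simpa using hr)).symm⟩

theorem mem_range_of_isAlgebraic (hR : IsAbsolutelyIntegrallyClosed R) [IsDomain R]
    {K L : Type*} [Field K] [Field L] [Algebra R K] [IsFractionRing R K] [Algebra K L]
    [Algebra R L] [IsScalarTower R K L] {x : L} (hx : IsAlgebraic K x) :
    x ∈ (algebraMap K L).range := by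
  obtain ⟨d, hd, hdx⟩ := ((IsFractionRing.isAlgebraic_iff R K L).mpr hx).exists_integral_multiple
  obtain ⟨b, hb⟩ := hR.mem_range_of_isIntegral hdx
  have hdK : algebraMap R K d ≠ 0 :=
    IsFractionRing.to_map_ne_zero_of_mem_nonZeroDivisors (mem_nonZeroDivisors_of_ne_zero hd)
  refine ⟨algebraMap R K b / algebraMap R K d, ?_⟩
  rw [map_div₀, div_eq_iff ((algebraMap K L).injective.ne_iff' (map_zero _) |>.mpr hdK),
    ← IsScalarTower.algebraMap_apply, ← IsScalarTower.algebraMap_apply, hb, Algebra.smul_def,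
    mul_comm]

theorem isAlgClosed_of_isFractionRing (hR : IsAbsolutelyIntegrallyClosed R) [IsDomain R]
    (K : Type*) [Field K] [Algebra R K] [IsFractionRing R K] : IsAlgClosed K := by
  refine IsAlgClosed.of_exists_root _ fun p hp hirr => ?_
  obtain ⟨x, hx⟩ := IsAlgClosed.exists_aeval_eq_zero (AlgebraicClosure K) p
    (degree_pos_of_irreducible hirr).ne'
  obtain ⟨k, rfl⟩ := hR.mem_range_of_isAlgebraic (R := R) ⟨p, hp.ne_zero, hx⟩
  refine ⟨k, (algebraMap K (AlgebraicClosure K)).injective ?_⟩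
  rwa [map_zero, ← aeval_algebraMap_apply_eq_algebraMap_eval]

end IsAbsolutelyIntegrallyClosed

theorem quotient_of_absolutely_integrally_closed_general
    (A : Type) [CommRing A]
    (hA : ∀ P : Polynomial A, P.Monic → 0 < P.degree → ∃ a : A, P.IsRoot a)
    (𝔮 : Ideal A) [𝔮.IsPrime] :
    (∀ P : Polynomial (A ⧸ 𝔮), P.Monic → 0 < P.degree → ∃ a : A ⧸ 𝔮, P.IsRoot a) ∧
      IsAlgClosed (FractionRing (A ⧸ 𝔮)) := by
  have hquot : IsAbsolutelyIntegrallyClosed (A ⧸ 𝔮) :=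
    IsAbsolutelyIntegrallyClosed.of_surjective hA _ Ideal.Quotient.mk_surjective
  exact ⟨hquot, hquot.isAlgClosed_of_isFractionRing _⟩

/-- Quotients of absolutely integrally closed domains by prime ideals are absolutely
integrally closed; consequently the fraction field of the quotient is algebraically
closed. -/
theorem quotient_of_absolutely_integrally_closed
    (A : Type) [CommRing A] [IsDomain A]
    (hA : ∀ P : Polynomial A, P.Monic → 0 < P.degree → ∃ a : A, P.IsRoot a)
    (𝔮 : Ideal A) [𝔮.IsPrime] :
    (∀ P : Polynomial (A ⧸ 𝔮), P.Monic → 0 < P.degree → ∃ a : A ⧸ 𝔮, P.IsRoot a) ∧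
      IsAlgClosed (FractionRing (A ⧸ 𝔮)) :=
  quotient_of_absolutely_integrally_closed_general A hA 𝔮
end

section
/- Let C be a commutative ring, let x_2, …, x_d, p be elements of C, and let I be the ideal (x_2, …, x_d) of C. Assume that C is separated and complete for the I-adic topology, and that for every integer n ≥ 1 the sequence (x_2^n, …, x_d^n, p) is a regular sequence on C. Then the ideal pC is closed for the I-adic topology; that is, ⋂_{n ≥ 1} (pC + (x_2^n, …, x_d^n)C) = pC. -/
open Ideal Set

theorem Fin.snoc_image_setOf_lt_last {α : Type*} {m : ℕ} (f : Fin m → α) (a : α) :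
    (Fin.snoc f a : Fin (m + 1) → α) '' {j | j < Fin.last m} = range f := by
  have : {j : Fin (m + 1) | j < Fin.last m} = range Fin.castSucc := by
    ext j
    simp only [mem_ofPred_eq, mem_range, Fin.exists_castSucc_eq, Fin.lt_last_iff_ne_last]
  rw [this, ← range_comp, Fin.snoc_comp_castSucc]

section

variable {R ι : Type*} [CommRing R]

theorem IsRegSeq.mem_span_of_snoc_mul_mem {m : ℕ} {f : Fin m → R} {q : R}
    (h : IsRegSeq (Fin.snoc f q : Fin (m + 1) → R)) (b : R) :
    q * b ∈ span (range f) → b ∈ span (range f) := by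
  simpa only [Fin.snoc_last, Fin.snoc_image_setOf_lt_last] using h.1 (Fin.last m) b

theorem Ideal.span_range_pow_le_pow (x : ι → R) (n : ℕ) :
    span (range fun i => x i ^ n) ≤ span (range x) ^ n :=
  span_le.2 <| range_subset_iff.2 fun i => pow_mem_pow (subset_span (mem_range_self i)) n

theorem Ideal.antitone_span_range_pow (x : ι → R) :
    Antitone fun n => span (range fun i => x i ^ n) := fun k n hkn =>
  span_le.2 <| range_subset_iff.2 fun i => by
    rw [SetLike.mem_coe, ← pow_sub_mul_pow (x i) hkn]
    exact mul_mem_left _ _ (subset_span (mem_range_self i))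

variable {I : Ideal R}

theorem IsHausdorff.eq_zero_of_forall_mem_pow [IsHausdorff I R] {a : R}
    (h : ∀ n, a ∈ I ^ n) : a = 0 :=
  IsHausdorff.haus ‹_› a fun n => by
    rw [SModEq.zero, smul_eq_mul, mul_top]
    exact h n

theorem IsPrecomplete.exists_forall_sub_mem_pow [IsPrecomplete I R] {f : ℕ → R}
    (hf : ∀ {k n}, k ≤ n → f k - f n ∈ I ^ k) : ∃ L, ∀ n, f n - L ∈ I ^ n := by
  obtain ⟨L, hL⟩ := IsPrecomplete.prec ‹_› (I := I) (f := f) fun h => by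
    rw [SModEq.sub_mem, smul_eq_mul, mul_top]
    exact hf h
  exact ⟨L, fun n => by simpa only [SModEq.sub_mem, smul_eq_mul, mul_top] using hL n⟩

theorem IsAdicComplete.iInf_span_singleton_sup_eq [IsAdicComplete I R] {J : ℕ → Ideal R}
    (hJ : Antitone J) (hJI : ∀ n, J n ≤ I ^ n) {q : R} (hq : ∀ n b, q * b ∈ J n → b ∈ J n) :
    ⨅ n, span {q} ⊔ J n = span {q} := by
  refine le_antisymm (fun a ha => ?_) (le_iInf fun _ => le_sup_left)
  have hdecomp : ∀ n, ∃ b, a - q * b ∈ J n := fun n => by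
    obtain ⟨_, hy, c, hc, rfl⟩ := Submodule.mem_sup.1 (mem_iInf.1 ha n)
    obtain ⟨b, rfl⟩ := mem_span_singleton'.1 hy
    exact ⟨b, by rwa [mul_comm, add_sub_cancel_left]⟩
  choose b hb using hdecomp
  have hcauchy : ∀ {k n}, k ≤ n → b k - b n ∈ I ^ k := fun {k n} hkn => by
    refine hJI k (hq k _ ?_)
    have := sub_mem (hJ hkn (hb n)) (hb k)
    rwa [sub_sub_sub_cancel_left, ← mul_sub] at this
  obtain ⟨L, hL⟩ := IsPrecomplete.exists_forall_sub_mem_pow hcauchy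
  have hzero : a - q * L = 0 := IsHausdorff.eq_zero_of_forall_mem_pow (I := I) fun n => by
    rw [← sub_add_sub_cancel a (q * b n), ← mul_sub]
    exact add_mem (hJI n (hb n)) (mul_mem_left _ q (hL n))
  exact mem_span_singleton'.2 ⟨L, by rw [mul_comm, ← sub_eq_zero.1 hzero]⟩

end

/-- **Step in Proposition 2.2**: if `C` is complete and separated for the `(x_2,…,x_d)`-adic
topology and `(x_2^n, …, x_d^n, q)` is a regular sequence for every `n ≥ 1`, then the ideal
`qC` is closed for the `(x_2,…,x_d)`-adic topology:
`⋂_{n ≥ 1} (qC + (x_2^n,…,x_d^n)C) = qC`. -/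
theorem principal_ideal_adically_closed
    (C : Type) [CommRing C] (m : ℕ) (x : Fin m → C) (q : C)
    [IsAdicComplete (Ideal.span (Set.range x)) C]
    (hreg : ∀ n : ℕ, 0 < n → IsRegSeq (Fin.snoc (fun i : Fin m => x i ^ n) q)) :
    (⨅ n : ℕ, Ideal.span {q} ⊔ Ideal.span (Set.range fun i : Fin m => x i ^ (n + 1))) =
      Ideal.span {q} := by
  refine IsAdicComplete.iInf_span_singleton_sup_eq (I := span (range x))
    (fun _ _ h => antitone_span_range_pow x (Nat.succ_le_succ h)) (fun n => ?_)
    (fun n _ hb => (hreg (n + 1) n.succ_pos).mem_span_of_snoc_mul_mem _ hb)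
  exact (span_range_pow_le_pow x (n + 1)).trans (pow_le_pow_right n.le_succ)
end

section
/- Let p be a prime number and let A be a domain which is absolutely integrally closed (every monic polynomial with coefficients in A has a root in A). Assume p·1 ≠ 0 in A, and let π ∈ A be an element with π^p = p·1. Then the map A/(π) → A/(p) induced by x ↦ x^p is a well-defined ring isomorphism (it is an additive and multiplicative bijection between the two quotient rings). -/
open Polynomial

/-- Splitting lemma: in a domain where every monic polynomial of positive degree has a
root, any root in the fraction field of a monic polynomial lies in the image of the ring. -/
private lemma aux_root_in_ring (A : Type) [CommRing A] [IsDomain A]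
    (hA : ∀ P : Polynomial A, P.Monic → 0 < P.degree → ∃ a : A, P.IsRoot a) :
    ∀ (n : ℕ) (P : Polynomial A), P.Monic → P.natDegree = n →
      ∀ t : FractionRing A, (P.map (algebraMap A (FractionRing A))).eval t = 0 →
        ∃ a : A, algebraMap A (FractionRing A) a = t := by
  intro n
  induction n with
  | zero =>
    intro P hm hd t ht
    rw [Polynomial.eq_one_of_monic_natDegree_zero hm hd] at ht
    simp at ht
  | succ k ih =>
    intro P hm hd t ht
    obtain ⟨a, ha⟩ := hA P hm (by rw [← Polynomial.natDegree_pos_iff_degree_pos]; omega)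
    have hfac : (X - C a) * (P /ₘ (X - C a)) = P :=
      (Polynomial.mul_divByMonic_eq_iff_isRoot).mpr ha
    set Q := P /ₘ (X - C a) with hQ
    have hQm : Q.Monic := by
      have := hfac ▸ hm
      exact (Polynomial.monic_X_sub_C a).of_mul_monic_left this
    have hQd : Q.natDegree = k := by
      have h1 : P.natDegree = (X - C a).natDegree + Q.natDegree := by
        rw [← hfac]
        exact Polynomial.natDegree_mul (Polynomial.monic_X_sub_C a).ne_zero hQm.ne_zero
      rw [hd, Polynomial.natDegree_X_sub_C] at h1
      omega
    have := ht
    rw [← hfac, Polynomial.map_mul, Polynomial.eval_mul] at this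
    rcases mul_eq_zero.mp this with h | h
    · refine ⟨a, ?_⟩
      rw [Polynomial.map_sub, Polynomial.map_X, Polynomial.map_C, Polynomial.eval_sub,
        Polynomial.eval_X, Polynomial.eval_C] at h
      linear_combination -h
    · exact ih Q hQm hQd t h

/-- In an absolutely integrally closed domain `A` with `p·1 ≠ 0` and an element `π` with
`π^p = p`, the `p`-th power map induces a well-defined ring isomorphism `A/(π) ≃ A/(p)`
(a "perfectoid"-type property of `A`). -/
theorem pow_p_induces_iso_of_absolutely_integrally_closed
    (p : ℕ) (hp : p.Prime) (A : Type) [CommRing A] [IsDomain A]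
    (hA : ∀ P : Polynomial A, P.Monic → 0 < P.degree → ∃ a : A, P.IsRoot a)
    (hp0 : (p : A) ≠ 0) (π : A) (hπ : π ^ p = (p : A)) :
    ∃ e : (A ⧸ Ideal.span {π}) ≃+* (A ⧸ Ideal.span {(p : A)}),
      ∀ x : A,
        e (Ideal.Quotient.mk (Ideal.span {π}) x) =
          Ideal.Quotient.mk (Ideal.span {(p : A)}) (x ^ p) := by
  have hπ0 : π ≠ 0 := by
    intro h; apply hp0; rw [← hπ, h, zero_pow hp.ne_zero]
  have hppos : 0 < p := hp.pos
  set I : Ideal A := Ideal.span {(p : A)} with hI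
  have hmkp : Ideal.Quotient.mk I (p : A) = 0 :=
    Ideal.Quotient.eq_zero_iff_mem.mpr (Ideal.mem_span_singleton_self _)
  -- the p-th power ring hom A → A/(p)
  let φ : A →+* (A ⧸ I) :=
    { toFun := fun x => Ideal.Quotient.mk I (x ^ p)
      map_one' := by simp
      map_mul' := by intro x y; simp [mul_pow]
      map_zero' := by simp [zero_pow hp.ne_zero]
      map_add' := by
        intro x y
        obtain ⟨r, hr⟩ := exists_add_pow_prime_eq hp x y
        simp only [hr, map_add, map_mul, map_natCast]
        rw [show ((p : A ⧸ I)) = Ideal.Quotient.mk I (p : A) from (map_natCast (Ideal.Quotient.mk I) p).symm, hmkp]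
        ring }
  have hφ : ∀ x, φ x = Ideal.Quotient.mk I (x ^ p) := fun _ => rfl
  -- surjectivity
  have hsurj : Function.Surjective φ := by
    intro y
    obtain ⟨c, rfl⟩ := Ideal.Quotient.mk_surjective y
    obtain ⟨a, ha⟩ := hA (X ^ p - C c) (Polynomial.monic_X_pow_sub_C c hp.ne_zero)
      (by
        rw [Polynomial.degree_X_pow_sub_C hppos]
        exact_mod_cast hppos)
    refine ⟨a, ?_⟩
    have : a ^ p - c = 0 := by simpa [Polynomial.IsRoot] using ha
    rw [hφ, sub_eq_zero.mp this]
  -- kernel computation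
  have hker : RingHom.ker φ = Ideal.span {π} := by
    ext x
    simp only [RingHom.mem_ker, hφ, Ideal.Quotient.eq_zero_iff_mem, hI,
      Ideal.mem_span_singleton]
    constructor
    · rintro ⟨c, hc⟩
      -- x^p = p * c = π^p * c; take a p-th root d of c, then (x/π) is integral
      rw [← hπ] at hc
      set K := FractionRing A
      let f := algebraMap A K
      have hfinj : Function.Injective f := IsFractionRing.injective A K
      have hfπ : f π ≠ 0 := fun h => hπ0 (hfinj (by simpa using h))
      set t : K := f x / f π with htdef
      have hπpne : f (π ^ p) ≠ 0 := by rw [map_pow]; exact pow_ne_zero _ hfπ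
      have htp : t ^ p = f c := by
        rw [htdef, div_pow, ← map_pow, ← map_pow, hc, map_mul, mul_comm, mul_div_assoc,
          div_self hπpne, mul_one]
      have hroot : ((X ^ p - C c : Polynomial A).map f).eval t = 0 := by
        simp [Polynomial.eval_pow, htp]
      obtain ⟨a, ha⟩ := aux_root_in_ring A hA p (X ^ p - C c)
        (Polynomial.monic_X_pow_sub_C c hp.ne_zero)
        (by rw [Polynomial.natDegree_X_pow_sub_C]) t hroot
      refine ⟨a, hfinj ?_⟩
      rw [map_mul]
      rw [ha, htdef, mul_div_cancel₀ _ hfπ]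
    · rintro ⟨c, rfl⟩
      exact ⟨c ^ p, by rw [← hπ, mul_pow]⟩
  refine ⟨(Ideal.quotEquivOfEq hker.symm).trans
    (RingHom.quotientKerEquivOfSurjective hsurj), fun x => ?_⟩
  simp only [RingEquiv.trans_apply, Ideal.quotEquivOfEq_mk]
  rfl
end

section
/- (Davis prime avoidance) Let A be a commutative ring, x ∈ A an element, I an ideal of A, and 𝔮_1, …, 𝔮_n finitely many prime ideals of A. If for every i the ideal (x) + I is not contained in 𝔮_i, then there exists y ∈ I such that x + y ∉ 𝔮_i for every i. -/
/-!
Induct on the finite set of primes, removing a minimal one `P`. If `y ∈ I` makes `x + y` avoid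
the others but `x + y ∈ P`, then `I ⊄ P`, and no other prime of the set lies in `P`; since `P` is
prime, `I ⊓ ⋂ q` is then not contained in `P`, and adding an element `z` of it outside `P`
moves `x + y` out of `P` without moving it into any of the other primes.
-/

namespace Ideal

variable {A : Type*} [CommRing A]

theorem exists_mem_notMem_forall_mem_of_not_le {P I : Ideal A} (hP : P.IsPrime) (hI : ¬ I ≤ P)
    {S : Finset (Ideal A)} (hS : ∀ q ∈ S, ¬ q ≤ P) :
    ∃ z ∈ I, z ∉ P ∧ ∀ q ∈ S, z ∈ q := by
  have hinf : ¬ I ⊓ S.inf id ≤ P := by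
    rw [hP.inf_le, hP.inf_le']
    rintro (hIP | ⟨q, hq, hqP⟩)
    exacts [hI hIP, hS q hq hqP]
  obtain ⟨z, hz, hzP⟩ := SetLike.not_le_iff_exists.mp hinf
  exact ⟨z, (mem_inf.mp hz).1, hzP, fun q hq => Finset.inf_le (f := id) hq (mem_inf.mp hz).2⟩

theorem exists_add_notMem_insert {x : A} {I P : Ideal A} (hP : P.IsPrime)
    (hxI : ¬ span {x} ⊔ I ≤ P) {S : Finset (Ideal A)} (hS : ∀ q ∈ S, ¬ q ≤ P)
    {y : A} (hy : y ∈ I) (hxy : ∀ q ∈ S, x + y ∉ q) :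
    ∃ y' ∈ I, ∀ q ∈ insert P S, x + y' ∉ q := by
  by_cases hxyP : x + y ∈ P
  swap
  · exact ⟨y, hy, Finset.forall_mem_insert _ _ _ |>.mpr ⟨hxyP, hxy⟩⟩
  have hIP : ¬ I ≤ P := fun hIP => hxI <| sup_le
    (span_singleton_le_iff_mem _ |>.mpr <| by simpa using P.sub_mem hxyP (hIP hy)) hIP
  obtain ⟨z, hzI, hzP, hzS⟩ := exists_mem_notMem_forall_mem_of_not_le hP hIP hS
  refine ⟨y + z, I.add_mem hy hzI, Finset.forall_mem_insert _ _ _ |>.mpr ⟨?_, ?_⟩⟩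
  · rw [← add_assoc, P.add_mem_iff_right hxyP]
    exact hzP
  · intro q hq
    rw [← add_assoc, q.add_mem_iff_left (hzS q hq)]
    exact hxy q hq

theorem exists_add_notMem_of_finset (x : A) (I : Ideal A) (S : Finset (Ideal A))
    (hprime : ∀ q ∈ S, q.IsPrime) (hS : ∀ q ∈ S, ¬ span {x} ⊔ I ≤ q) :
    ∃ y ∈ I, ∀ q ∈ S, x + y ∉ q := by
  classical
  induction S using Finset.strongInduction with
  | H S ih =>
    rcases S.eq_empty_or_nonempty with rfl | hne
    · exact ⟨0, I.zero_mem, by simp⟩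
    obtain ⟨P, hPS, hPmin⟩ := S.exists_minimal hne
    obtain ⟨y, hy, hxy⟩ := ih (S.erase P) (S.erase_ssubset hPS)
      (fun q hq => hprime q (S.mem_of_mem_erase hq)) (fun q hq => hS q (S.mem_of_mem_erase hq))
    have hnotle : ∀ q ∈ S.erase P, ¬ q ≤ P := fun q hq hqP =>
      Finset.ne_of_mem_erase hq (le_antisymm hqP (hPmin (S.mem_of_mem_erase hq) hqP))
    obtain ⟨y', hy', hxy'⟩ := exists_add_notMem_insert (hprime P hPS) (hS P hPS) hnotle hy hxy
    exact ⟨y', hy', Finset.insert_erase hPS ▸ hxy'⟩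

end Ideal

/-- **Davis prime avoidance**: if `(x) + I` is not contained in any of the prime ideals
`𝔮 1, …, 𝔮 n`, then some element of the coset `x + I` avoids all of them. -/
theorem davis_prime_avoidance
    (A : Type) [CommRing A] (x : A) (I : Ideal A)
    (n : ℕ) (𝔮 : Fin n → Ideal A) (h𝔮 : ∀ i, (𝔮 i).IsPrime)
    (h : ∀ i, ¬ (Ideal.span {x} ⊔ I ≤ 𝔮 i)) :
    ∃ y ∈ I, ∀ i, x + y ∉ 𝔮 i := by
  classical
  obtain ⟨y, hy, hxy⟩ := Ideal.exists_add_notMem_of_finset x I (Finset.univ.image 𝔮)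
    (by simpa using h𝔮) (by simpa using h)
  exact ⟨y, hy, fun i => hxy _ (Finset.mem_image_of_mem 𝔮 (Finset.mem_univ i))⟩
end

section
/- Let φ : A → B be an injective homomorphism of commutative rings, and let P be a finitely generated projective A-module such that the base change B ⊗_A P is a projective B-module of constant rank r (that is, for every prime ideal 𝔮 of B, the localization (B ⊗_A P)_𝔮 is a free B_𝔮-module of rank r). Then P is of constant rank r over A: for every prime ideal 𝔭 of A, the localization P_𝔭 is a free A_𝔭-module of rank r. -/
open TensorProduct

noncomputable def gabberAuxEquiv (A : Type*) [CommRing A] (P : Type*) [AddCommGroup P]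
    [Module A P] (S : Submonoid A) :
    Localization S ⊗[A] P ≃ₗ[Localization S] LocalizedModule S P :=
  (IsLocalizedModule.isBaseChange S (Localization S)
    (LocalizedModule.mkLinearMap S P)).equiv

lemma gabberAuxFree (A : Type*) [CommRing A] (P : Type*) [AddCommGroup P] [Module A P]
    [Module.Finite A P] [Module.Projective A P]
    (C : Type*) [CommRing C] [Algebra A C] [IsLocalRing C] :
    Module.Free C (C ⊗[A] P) := by
  have : Module.FinitePresentation C (C ⊗[A] P) :=
    Module.finitePresentation_of_projective _ _
  exact Module.free_of_flat_of_isLocalRing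

lemma gabberAuxRank (R : Type*) [CommRing R] [Nontrivial R] (S : Type*) [CommRing S]
    [Nontrivial S] [Algebra R S] (M : Type*) [AddCommGroup M] [Module R M] [Module.Free R M] :
    Module.finrank S (S ⊗[R] M) = Module.finrank R M :=
  Module.finrank_baseChange

open TensorProduct in
/-- **Erratum (Gabber)**: for an injective ring extension `A ↪ B` and a finitely generated
projective `A`-module `P`, if `B ⊗_A P` has constant rank `r` over `B`, then `P` has
constant rank `r` over `A`. -/
theorem rank_constant_of_injective_baseChange
    (A B : Type) [CommRing A] [CommRing B] [Algebra A B]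
    (hinj : Function.Injective (algebraMap A B))
    (P : Type) [AddCommGroup P] [Module A P] [Module.Finite A P] [Module.Projective A P]
    (r : ℕ)
    (hB : ∀ (𝔮 : Ideal B) [𝔮.IsPrime],
      Module.Free (Localization.AtPrime 𝔮) (LocalizedModule 𝔮.primeCompl (B ⊗[A] P)) ∧
      Module.finrank (Localization.AtPrime 𝔮) (LocalizedModule 𝔮.primeCompl (B ⊗[A] P)) = r) :
    ∀ (𝔭 : Ideal A) [𝔭.IsPrime],
      Module.Free (Localization.AtPrime 𝔭) (LocalizedModule 𝔭.primeCompl P) ∧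
      Module.finrank (Localization.AtPrime 𝔭) (LocalizedModule 𝔭.primeCompl P) = r := by
  intro 𝔭 h𝔭
  haveI freeP : Module.Free (Localization.AtPrime 𝔭) (Localization.AtPrime 𝔭 ⊗[A] P) :=
    gabberAuxFree A P _
  refine ⟨Module.Free.of_equiv (gabberAuxEquiv A P 𝔭.primeCompl), ?_⟩
  -- pick a minimal prime below 𝔭 and a prime of B above it
  obtain ⟨𝔭', h𝔭'min, h𝔭'le⟩ := Ideal.exists_minimalPrimes_le (I := (⊥ : Ideal A)) (J := 𝔭) bot_le
  haveI h𝔭'prime : 𝔭'.IsPrime := h𝔭'min.1.1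
  obtain ⟨𝔮, h𝔮prime, h𝔮comap⟩ :=
    Ideal.exists_comap_eq_of_mem_minimalPrimes_of_injective hinj 𝔭' h𝔭'min
  haveI freeP' : Module.Free (Localization.AtPrime 𝔭') (Localization.AtPrime 𝔭' ⊗[A] P) :=
    gabberAuxFree A P _
  -- Step 1 : LocalizedModule = tensor
  have step1 : Module.finrank (Localization.AtPrime 𝔭) (LocalizedModule 𝔭.primeCompl P)
      = Module.finrank (Localization.AtPrime 𝔭) (Localization.AtPrime 𝔭 ⊗[A] P) :=
    (gabberAuxEquiv A P 𝔭.primeCompl).symm.finrank_eq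
  -- Step 2 : pass from 𝔭 to the minimal prime 𝔭'
  have hle : 𝔭.primeCompl ≤ 𝔭'.primeCompl := fun x hx hx' ↦ hx (h𝔭'le hx')
  have step2 : Module.finrank (Localization.AtPrime 𝔭') (Localization.AtPrime 𝔭' ⊗[A] P)
      = Module.finrank (Localization.AtPrime 𝔭) (Localization.AtPrime 𝔭 ⊗[A] P) := by
    letI : Algebra (Localization.AtPrime 𝔭) (Localization.AtPrime 𝔭') :=
      IsLocalization.localizationAlgebraOfSubmonoidLe _ _ 𝔭.primeCompl 𝔭'.primeCompl hle
    haveI : IsScalarTower A (Localization.AtPrime 𝔭) (Localization.AtPrime 𝔭') :=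
      IsLocalization.localization_isScalarTower_of_submonoid_le _ _ _ _ hle
    calc Module.finrank (Localization.AtPrime 𝔭') (Localization.AtPrime 𝔭' ⊗[A] P)
        = Module.finrank (Localization.AtPrime 𝔭')
            (Localization.AtPrime 𝔭' ⊗[Localization.AtPrime 𝔭]
              (Localization.AtPrime 𝔭 ⊗[A] P)) :=
          (AlgebraTensorModule.cancelBaseChange A (Localization.AtPrime 𝔭)
            (Localization.AtPrime 𝔭') (Localization.AtPrime 𝔭') P).symm.finrank_eq
      _ = Module.finrank (Localization.AtPrime 𝔭) (Localization.AtPrime 𝔭 ⊗[A] P) :=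
          gabberAuxRank _ _ _
  -- Step 3 : pass from 𝔭' to 𝔮
  have step3 : Module.finrank (Localization.AtPrime 𝔮) (Localization.AtPrime 𝔮 ⊗[A] P)
      = Module.finrank (Localization.AtPrime 𝔭') (Localization.AtPrime 𝔭' ⊗[A] P) := by
    letI : Algebra (Localization.AtPrime 𝔭') (Localization.AtPrime 𝔮) :=
      (Localization.localRingHom 𝔭' 𝔮 (algebraMap A B) h𝔮comap.symm).toAlgebra
    haveI : IsScalarTower A (Localization.AtPrime 𝔭') (Localization.AtPrime 𝔮) :=
      IsScalarTower.of_algebraMap_eq' (by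
        rw [RingHom.algebraMap_toAlgebra, Localization.localRingHom,
          IsLocalization.map_comp, ← IsScalarTower.algebraMap_eq])
    calc Module.finrank (Localization.AtPrime 𝔮) (Localization.AtPrime 𝔮 ⊗[A] P)
        = Module.finrank (Localization.AtPrime 𝔮)
            (Localization.AtPrime 𝔮 ⊗[Localization.AtPrime 𝔭']
              (Localization.AtPrime 𝔭' ⊗[A] P)) :=
          (AlgebraTensorModule.cancelBaseChange A (Localization.AtPrime 𝔭')
            (Localization.AtPrime 𝔮) (Localization.AtPrime 𝔮) P).symm.finrank_eq
      _ = Module.finrank (Localization.AtPrime 𝔭') (Localization.AtPrime 𝔭' ⊗[A] P) :=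
          gabberAuxRank _ _ _
  -- Step 4 : identify with the base change over B
  have step4 : Module.finrank (Localization.AtPrime 𝔮)
        (Localization.AtPrime 𝔮 ⊗[B] (B ⊗[A] P))
      = Module.finrank (Localization.AtPrime 𝔮) (Localization.AtPrime 𝔮 ⊗[A] P) :=
    (AlgebraTensorModule.cancelBaseChange A B (Localization.AtPrime 𝔮)
      (Localization.AtPrime 𝔮) P).finrank_eq
  have step5 : Module.finrank (Localization.AtPrime 𝔮)
        (LocalizedModule 𝔮.primeCompl (B ⊗[A] P))
      = Module.finrank (Localization.AtPrime 𝔮) (Localization.AtPrime 𝔮 ⊗[B] (B ⊗[A] P)) :=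
    (gabberAuxEquiv B (B ⊗[A] P) 𝔮.primeCompl).symm.finrank_eq
  have := (hB 𝔮).2
  omega
end
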